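/- If the initial data satisfy the chaos condition g_B(0) = 0 for all B with |B| ≥ 2 and g_{{x}}(0) = g₁(0, x), then the cumulant expansion solution reduces to a single term: g_Y(t) = A_{|Y|}(t, {x}_{x∈Y}) ∏_{x∈Y} g₁(0, x), where A_{|Y|}(t,·) is the cumulant over partitions of Y into singleton clusters; moreover ‖g_Y(t)‖₁ ≤ n! e^{n+1} ‖g₁(0)‖₁^n for |Y| = n, assuming each S_B(-t) is an L¹-isometry. -/

import Mathlib

/-!
Every partition `P ≠ ⊥` of `Y` has a block of size at least two, so the chaos condition kills
its term and only the partition into singletons survives; partitions of the singletons of `Y`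
are just partitions of `Y`, which gives the reduced formula. Under the isometry hypothesis each
of its terms has norm at most `(k - 1)! ∏ ‖g₁ x‖`, and `∑_P (k_P - 1)! ≤ nⁿ ≤ n! eⁿ`.
-/

open Finset Nat

namespace Finpartition

variable {α : Type*} [DecidableEq α] {s : Finset α}

lemma eq_bot_of_forall_card_le_one (P : Finpartition s) (h : ∀ B ∈ P.parts, #B ≤ 1) :
    P = ⊥ :=
  le_bot_iff.1 fun B hB => by
    obtain ⟨a, rfl⟩ := card_eq_one.1 <|
      (h B hB).antisymm (card_pos.2 (P.nonempty_of_mem_parts hB))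
    exact ⟨{a}, mem_bot_iff.2 ⟨a, P.le hB (mem_singleton_self a), rfl⟩, le_rfl⟩

lemma parts_eq_image_part (P : Finpartition s) : P.parts = s.image P.part := by
  ext t
  refine ⟨fun ht => ?_, ?_⟩
  · obtain ⟨a, ha⟩ := P.nonempty_of_mem_parts ht
    exact mem_image.2 ⟨a, P.le ht ha, P.part_eq_of_mem ht ha⟩
  · intro ht
    obtain ⟨a, ha, rfl⟩ := mem_image.1 ht
    exact P.part_mem.2 ha

lemma ext_of_part_eq_part_iff {P Q : Finpartition s}
    (h : ∀ a ∈ s, ∀ b ∈ s, P.part a = P.part b ↔ Q.part a = Q.part b) : P = Q := by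
  have hpart : ∀ b ∈ s, P.part b = Q.part b := fun b hb => by
    ext a
    by_cases ha : a ∈ s
    · rw [P.mem_part_iff_part_eq_part ha hb, Q.mem_part_iff_part_eq_part ha hb, h a ha b hb]
    · exact iff_of_false (fun h' => ha (P.part_subset b h')) (fun h' => ha (Q.part_subset b h'))
  ext1
  rw [P.parts_eq_image_part, Q.parts_eq_image_part]
  exact image_congr hpart

def colourByBlock {β : Type*} (Pe : Σ P : Finpartition s, P.parts ↪ β) (x : s) : β :=
  Pe.2 ⟨Pe.1.part x, Pe.1.part_mem.2 x.2⟩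

lemma colourByBlock_injective {β : Type*} :
    Function.Injective (colourByBlock : (Σ P : Finpartition s, P.parts ↪ β) → s → β) := by
  rintro ⟨P, e⟩ ⟨Q, d⟩ hed
  have hlabel : ∀ a (ha : a ∈ s), e ⟨P.part a, P.part_mem.2 ha⟩ = d ⟨Q.part a, Q.part_mem.2 ha⟩ :=
    fun a ha => congrFun hed ⟨a, ha⟩
  obtain rfl : P = Q := ext_of_part_eq_part_iff fun a ha b hb => by
    rw [← Subtype.mk.injEq _ (P.part_mem.2 ha) _ (P.part_mem.2 hb), ← e.apply_eq_iff_eq,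
      hlabel a ha, hlabel b hb, d.apply_eq_iff_eq, Subtype.mk.injEq]
  congr
  ext ⟨B, hB⟩ : 1
  obtain ⟨a, ha⟩ := P.nonempty_of_mem_parts hB
  simpa only [P.part_eq_of_mem hB ha] using hlabel a (P.le hB ha)

/-- A partition with `k` blocks has `n.descFactorial k ≥ (k - 1)!` injective labellings of its
blocks by `Fin n`, and distinct labelled partitions colour the points of `s` differently. -/
lemma sum_factorial_card_parts_sub_one_le (s : Finset α) :
    ∑ P : Finpartition s, (#P.parts - 1)! ≤ #s ^ #s := by
  calc ∑ P : Finpartition s, (#P.parts - 1)!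
      ≤ ∑ P : Finpartition s, Fintype.card (P.parts ↪ Fin #s) := by
        refine sum_le_sum fun P _ => ?_
        rw [Fintype.card_embedding_eq, Fintype.card_fin, Fintype.card_coe,
          Nat.descFactorial_eq_factorial_mul_choose]
        exact (Nat.factorial_le (Nat.sub_le _ _)).trans
          (Nat.le_mul_of_pos_right _ (Nat.choose_pos P.card_parts_le_card))
    _ = Fintype.card (Σ P : Finpartition s, P.parts ↪ Fin #s) := Fintype.card_sigma.symm
    _ ≤ Fintype.card (s → Fin #s) := Fintype.card_le_of_injective _ colourByBlock_injective
    _ = #s ^ #s := by simp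

lemma mem_sup_id_iff {Z : Finset (Finset α)} (hZ : Z ⊆ (⊥ : Finpartition s).parts) {x : α} :
    x ∈ Z.sup id ↔ {x} ∈ Z := by
  refine ⟨fun hx => ?_, fun hx => mem_sup.2 ⟨{x}, hx, mem_singleton_self x⟩⟩
  obtain ⟨t, ht, hxt⟩ := mem_sup.1 hx
  obtain ⟨a, -, rfl⟩ := mem_bot_iff.1 (hZ ht)
  rwa [mem_singleton.1 hxt]

lemma map_sup_id {Z : Finset (Finset α)} (hZ : Z ⊆ (⊥ : Finpartition s).parts) :
    (Z.sup id).map ⟨singleton, singleton_injective⟩ = Z := by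
  ext t
  refine ⟨fun ht => ?_, fun ht => ?_⟩
  · obtain ⟨x, hx, rfl⟩ := mem_map.1 ht
    exact (mem_sup_id_iff hZ).1 hx
  · obtain ⟨a, -, rfl⟩ := mem_bot_iff.1 (hZ ht)
    exact mem_map_of_mem _ ((mem_sup_id_iff hZ).2 ht)

lemma injOn_sup_id (P' : Finpartition (⊥ : Finpartition s).parts) :
    Set.InjOn (·.sup id) (P'.parts : Set (Finset (Finset α))) := fun Z₁ h₁ Z₂ h₂ h => by
  rw [← map_sup_id (P'.le h₁), ← map_sup_id (P'.le h₂)]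
  exact congrArg _ h

def ofSingletons (P' : Finpartition (⊥ : Finpartition s).parts) : Finpartition s :=
  ofExistsUnique (P'.parts.image (·.sup id))
    (forall_mem_image.2 fun _ hZ => (sup_mono (P'.le hZ)).trans_eq (⊥ : Finpartition s).sup_parts)
    (fun x hx => by
      obtain ⟨Z, hZ, hxZ⟩ := P'.exists_mem (mem_bot_iff.2 ⟨x, hx, rfl⟩)
      refine ⟨Z.sup id, ⟨mem_image_of_mem _ hZ, (mem_sup_id_iff (P'.le hZ)).2 hxZ⟩, ?_⟩
      rintro _ ⟨hW', hxW⟩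
      obtain ⟨W, hW, rfl⟩ := mem_image.1 hW'
      rw [P'.eq_of_mem_parts hW hZ ((mem_sup_id_iff (P'.le hW)).1 hxW) hxZ])
    (by
      simp only [mem_image, not_exists, not_and]
      intro Z hZ h
      obtain ⟨t, ht⟩ := P'.nonempty_of_mem_parts hZ
      obtain ⟨a, -, rfl⟩ := mem_bot_iff.1 (P'.le hZ ht)
      simpa [h] using (mem_sup_id_iff (P'.le hZ)).2 ht)

def toSingletons (P : Finpartition s) : Finpartition (⊥ : Finpartition s).parts :=
  ofExistsUnique (P.parts.image (Finset.map ⟨singleton, singleton_injective⟩))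
    (forall_mem_image.2 fun _ hB => map_subset_map.2 (P.le hB))
    (fun t ht => by
      obtain ⟨a, ha, rfl⟩ := mem_bot_iff.1 ht
      refine ⟨(P.part a).map _, ⟨mem_image_of_mem _ (P.part_mem.2 ha),
        mem_map_of_mem _ (P.mem_part_self.2 ha)⟩, ?_⟩
      rintro _ ⟨hu, hau⟩
      obtain ⟨B, hB, rfl⟩ := mem_image.1 hu
      rw [P.part_eq_of_mem hB (mem_map' _ |>.1 hau)])
    (by simp [map_eq_empty, P.empty_notMem_parts])

lemma ofSingletons_toSingletons (P : Finpartition s) : ofSingletons (toSingletons P) = P := by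
  ext1
  simp only [ofSingletons, toSingletons, ofExistsUnique_parts, image_image]
  exact (image_congr fun B _ => by simp [sup_map]).trans image_id

lemma toSingletons_ofSingletons (P' : Finpartition (⊥ : Finpartition s).parts) :
    toSingletons (ofSingletons P') = P' := by
  ext1
  simp only [ofSingletons, toSingletons, ofExistsUnique_parts, image_image]
  exact (image_congr fun Z hZ => map_sup_id (P'.le hZ)).trans image_id

def singletonsEquiv (s : Finset α) : Finpartition (⊥ : Finpartition s).parts ≃ Finpartition s :=
  ⟨ofSingletons, toSingletons, toSingletons_ofSingletons, ofSingletons_toSingletons⟩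

end Finpartition

/-- The Möbius function `μ(0̂, 1̂)` of the lattice of partitions of a `k`-element set. -/
def cumulantCoeff (k : ℕ) : ℤ := (-1) ^ (k - 1) * ((k - 1)! : ℤ)

lemma abs_cumulantCoeff (k : ℕ) : |cumulantCoeff k| = (k - 1)! := by
  simp [cumulantCoeff, abs_mul]

lemma pow_le_factorial_mul_exp (n : ℕ) : (n : ℝ) ^ n ≤ n ! * Real.exp n := by
  have := Real.pow_div_factorial_le_exp _ (Nat.cast_nonneg n) n
  rwa [div_le_iff₀ (by positivity), mul_comm] at this

section

variable {α : Type*} [DecidableEq α]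

lemma norm_sum_cumulantCoeff_smul_le {E : Type*} [SeminormedAddCommGroup E] (s : Finset α)
    (x : Finpartition s → E) {c : ℝ} (hx : ∀ P, ‖x P‖ ≤ c) :
    ‖∑ P, cumulantCoeff #P.parts • x P‖ ≤ (#s)! * Real.exp (#s + 1) * c := by
  have hc : 0 ≤ c := (norm_nonneg _).trans (hx ⊥)
  calc ‖∑ P, cumulantCoeff #P.parts • x P‖
      ≤ ∑ P : Finpartition s, ((#P.parts - 1)! : ℝ) * c := by
        refine (norm_sum_le _ _).trans (sum_le_sum fun P _ => ?_)
        refine (norm_zsmul_le _ _).trans (mul_le_mul ?_ (hx P) (norm_nonneg _) (by positivity))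
        rw [Int.norm_eq_abs, ← Int.cast_abs, abs_cumulantCoeff, Int.cast_natCast]
    _ = ((∑ P : Finpartition s, (#P.parts - 1)! : ℕ) : ℝ) * c := by push_cast; rw [sum_mul]
    _ ≤ ((#s ^ #s : ℕ) : ℝ) * c := by
        gcongr
        exact Finpartition.sum_factorial_card_parts_sub_one_le s
    _ ≤ (#s)! * Real.exp (#s + 1) * c := by
        push_cast
        gcongr
        exact (pow_le_factorial_mul_exp #s).trans (by gcongr; linarith)

lemma sum_cumulantCoeff_smul_of_chaos {A : Type*} [CommRing A] (Y : Finset α)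
    (S g₀ : Finset α → A) (g₁ : α → A)
    (hchaos : ∀ B : Finset α, 2 ≤ #B → g₀ B = 0) (hsing : ∀ x : α, g₀ {x} = g₁ x) :
    ∑ P : Finpartition Y, ∑ P' : Finpartition P.parts,
        cumulantCoeff #P'.parts • ((∏ Z ∈ P'.parts, S (Z.sup id)) * ∏ B ∈ P.parts, g₀ B) =
      (∑ P : Finpartition Y, cumulantCoeff #P.parts • ∏ B ∈ P.parts, S B) * ∏ x ∈ Y, g₁ x := by
  have hvanish (P : Finpartition Y) (hP : P ≠ ⊥) : ∏ B ∈ P.parts, g₀ B = 0 := by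
    obtain ⟨B, hB, hcard⟩ : ∃ B ∈ P.parts, 2 ≤ #B := by
      by_contra! h
      exact hP (P.eq_bot_of_forall_card_le_one fun B hB => Nat.le_of_lt_succ (h B hB))
    exact prod_eq_zero hB (hchaos B hcard)
  have hbot : ∏ B ∈ (⊥ : Finpartition Y).parts, g₀ B = ∏ x ∈ Y, g₁ x := by
    rw [Finpartition.parts_bot, prod_map]
    exact prod_congr rfl fun x _ => hsing x
  rw [Fintype.sum_eq_single ⊥ fun P hP => by simp [hvanish P hP], hbot, sum_mul]
  refine Fintype.sum_equiv (Finpartition.singletonsEquiv Y) _ _ fun P' => ?_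
  have hinj := Finpartition.injOn_sup_id P'
  simp only [Finpartition.singletonsEquiv, Equiv.coe_fn_mk, Finpartition.ofSingletons,
    Finpartition.ofExistsUnique_parts, Finset.card_image_of_injOn hinj, prod_image hinj,
    smul_mul_assoc]

end

/-- Under the chaos condition (`g_B(0) = 0` for `|B| ≥ 2`, `g_{{x}}(0) = g₁ x`), the
cumulant expansion solution reduces to the single term
`g_Y(t) = A_{|Y|}(t, singletons of Y) ∏_{x∈Y} g₁ x`, the `|Y|`-th order cumulant
being a sum over all partitions of `Y`; moreover, if the operators act as
`L¹`-isometries (hypothesis `hiso`), then `‖g_Y(t)‖ ≤ n! e^(n+1) ∏_{x∈Y} ‖g₁ x‖`. -/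
theorem chaos_condition_cumulant_expansion
    {α : Type*} [DecidableEq α] {A : Type*} [NormedCommRing A]
    (Y : Finset α) (S : Finset α → A) (g₀ : Finset α → A) (g₁ : α → A)
    (hchaos : ∀ B : Finset α, 2 ≤ B.card → g₀ B = 0)
    (hsing : ∀ x : α, g₀ {x} = g₁ x)
    (hiso : ∀ P : Finpartition Y,
      ‖(∏ B ∈ P.parts, S B) * ∏ x ∈ Y, g₁ x‖ = ∏ x ∈ Y, ‖g₁ x‖) :
    (∑ P : Finpartition Y,
        ∑ P' : Finpartition P.parts,
          ((-1 : ℤ) ^ (P'.parts.card - 1) * ((P'.parts.card - 1).factorial : ℤ)) •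
            ((∏ Z ∈ P'.parts, S (Z.sup id)) * ∏ B ∈ P.parts, g₀ B)) =
      (∑ P : Finpartition Y,
        ((-1 : ℤ) ^ (P.parts.card - 1) * ((P.parts.card - 1).factorial : ℤ)) •
          ∏ B ∈ P.parts, S B) * ∏ x ∈ Y, g₁ x ∧
    ‖∑ P : Finpartition Y,
        ∑ P' : Finpartition P.parts,
          ((-1 : ℤ) ^ (P'.parts.card - 1) * ((P'.parts.card - 1).factorial : ℤ)) •
            ((∏ Z ∈ P'.parts, S (Z.sup id)) * ∏ B ∈ P.parts, g₀ B)‖ ≤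
      (Y.card.factorial : ℝ) * Real.exp (Y.card + 1) * ∏ x ∈ Y, ‖g₁ x‖ := by
  have hreduce := sum_cumulantCoeff_smul_of_chaos Y S g₀ g₁ hchaos hsing
  refine ⟨hreduce, (congrArg norm hreduce).trans_le ?_⟩
  rw [sum_mul]
  simp only [smul_mul_assoc]
  exact norm_sum_cumulantCoeff_smul_le Y _ fun P => (hiso P).le
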